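/- arXiv:1306.4009 — 2 statements merged into one kernel-verified Lean document; each statement's English description precedes it below -/
import Mathlib

section
/- Let N ≥ 1 and let x, x̂ : Fin N → Fin 4 be two distinct 4-PAM symbol sequences. Then a^B(x, x̂) ≤ a^X(x, x̂); i.e., the asymptotic pairwise loss of the bit-wise decoder relative to the symbol-wise decoder is nonnegative. (This follows from the inequality (β + 2w)/√β ≤ √(β + 8w), valid whenever 0 ≤ w ≤ β and β > 0, together with w_c(x,x̂) ≤ β(x,x̂).) -/
open Finset

noncomputable section

/-- Pairwise weight of a pair of 4-PAM symbols: `1` if `|i−j| ∈ {1,3}`,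
`4` if `|i−j| = 2`, `0` if `i = j`. -/
def pw (i j : Fin 4) : ℝ :=
  if i = j then 0 else if ((i : ℤ) - (j : ℤ)).natAbs = 2 then 4 else 1

/-- Corner count: number of positions where the symbol pair is `(s₁,s₄)` or `(s₄,s₁)`. -/
def wc {N : ℕ} (x xh : Fin N → Fin 4) : ℕ :=
  (Finset.univ.filter fun k =>
    (x k, xh k) = ((0 : Fin 4), (3 : Fin 4)) ∨ (x k, xh k) = ((3 : Fin 4), (0 : Fin 4))).card

/-- Weighted error count `β(x, x̂)`. -/
def betaW {N : ℕ} (x xh : Fin N → Fin 4) : ℝ := ∑ k, pw (x k) (xh k)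

/-- Normalized distance of the symbol-wise decoder: `a^X = √(β + 8 w_c)`. -/
def aX {N : ℕ} (x xh : Fin N → Fin 4) : ℝ :=
  Real.sqrt (betaW x xh + 8 * wc x xh)

/-- Normalized distance of the bit-wise decoder: `a^B = (β + 2 w_c)/√β`. -/
def aB {N : ℕ} (x xh : Fin N → Fin 4) : ℝ :=
  (betaW x xh + 2 * wc x xh) / Real.sqrt (betaW x xh)

end

/-! Squaring, `a^B ≤ a^X` reads `(β + 2w)² ≤ (β + 8w) β`, i.e. `w (β - w) ≥ 0`. So it suffices that
`0 ≤ w_c ≤ β`, which holds because every corner position is an error and every error has weight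
at least `1`. -/

lemma pw_nonneg (i j : Fin 4) : 0 ≤ pw i j := by
  unfold pw; split_ifs <;> norm_num

lemma one_le_pw {i j : Fin 4} (h : i ≠ j) : 1 ≤ pw i j := by
  unfold pw; split_ifs <;> first | contradiction | norm_num

section betaW

variable {N : ℕ} {x xh : Fin N → Fin 4}

lemma card_le_betaW {s : Finset (Fin N)} (hs : ∀ k ∈ s, x k ≠ xh k) :
    (#s : ℝ) ≤ betaW x xh :=
  calc (#s : ℝ) = #s • (1 : ℝ) := by simp
    _ ≤ ∑ k ∈ s, pw (x k) (xh k) := card_nsmul_le_sum _ _ _ fun k hk => one_le_pw (hs k hk)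
    _ ≤ betaW x xh :=
      sum_le_sum_of_subset_of_nonneg (subset_univ s) fun _ _ _ => pw_nonneg _ _

lemma betaW_pos (hne : x ≠ xh) : 0 < betaW x xh := by
  obtain ⟨k, hk⟩ := Function.ne_iff.mp hne
  exact one_pos.trans_le (by simpa using card_le_betaW (s := {k}) (by simpa using hk))

lemma wc_le_betaW : (wc x xh : ℝ) ≤ betaW x xh :=
  card_le_betaW fun k hk => by
    rcases (mem_filter.mp hk).2 with h | h <;> simp_all [Prod.ext_iff]

end betaW

lemma add_two_mul_div_sqrt_le_sqrt {β w : ℝ} (hβ : 0 < β) (hw : 0 ≤ w) (hwβ : w ≤ β) :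
    (β + 2 * w) / √β ≤ √(β + 8 * w) := by
  rw [div_le_iff₀ (Real.sqrt_pos.mpr hβ), ← Real.sqrt_mul (by positivity),
    Real.le_sqrt (by positivity) (by positivity)]
  nlinarith [mul_nonneg hw (sub_nonneg.mpr hwβ)]

theorem aB_le_aX_general (N : ℕ) (x xh : Fin N → Fin 4) (hne : x ≠ xh) :
    aB x xh ≤ aX x xh :=
  add_two_mul_div_sqrt_le_sqrt (betaW_pos hne) (Nat.cast_nonneg _) wc_le_betaW

/-- The asymptotic pairwise loss of the bit-wise decoder is
nonnegative: for any two distinct 4-PAM symbol sequences, `a^B(x,x̂) ≤ a^X(x,x̂)`. -/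
theorem aB_le_aX (N : ℕ) (hN : 1 ≤ N) (x xh : Fin N → Fin 4) (hne : x ≠ xh) :
    aB x xh ≤ aX x xh :=
  aB_le_aX_general N x xh hne
end

section
/- (Theorem 3, GC1 case.) Let N ≥ 1, let L = GC1, and let B be a ZMod 2-submodule of (Fin N → ZMod 2 × ZMod 2) containing at least two elements. Suppose B contains a codeword b'' such that the second coordinate (b'' k).2 = 1 for every k ∈ Fin N. Then the minimum of a^X(x_b, x_b̂) over all pairs b ≠ b̂ in B equals the minimum of a^B(x_b, x_b̂) over all such pairs; i.e., the asymptotic loss L(B) of the bit-wise decoder is zero. -/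
open Finset

noncomputable section

/-- The Gray labeling GC1 (binary reflected Gray code) for 4-PAM. -/
def GC1 : Fin 4 ≃ (ZMod 2 × ZMod 2) where
  toFun := ![(0, 0), (0, 1), (1, 1), (1, 0)]
  invFun := fun p => if p = (0, 0) then 0 else if p = (0, 1) then 1
    else if p = (1, 1) then 2 else 3
  left_inv := by decide
  right_inv := by decide

/-- The Gray labeling GC2 for 4-PAM. -/
def GC2 : Fin 4 ≃ (ZMod 2 × ZMod 2) where
  toFun := ![(0, 0), (1, 0), (1, 1), (0, 1)]
  invFun := fun p => if p = (0, 0) then 0 else if p = (1, 0) then 1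
    else if p = (1, 1) then 2 else 3
  left_inv := by decide
  right_inv := by decide

/-- The Gray labeling GC3 for 4-PAM. -/
def GC3 : Fin 4 ≃ (ZMod 2 × ZMod 2) where
  toFun := ![(0, 1), (0, 0), (1, 0), (1, 1)]
  invFun := fun p => if p = (0, 1) then 0 else if p = (0, 0) then 1
    else if p = (1, 0) then 2 else 3
  left_inv := by decide
  right_inv := by decide

/-- The Gray labeling GC4 for 4-PAM. -/
def GC4 : Fin 4 ≃ (ZMod 2 × ZMod 2) where
  toFun := ![(1, 0), (0, 0), (0, 1), (1, 1)]
  invFun := fun p => if p = (1, 0) then 0 else if p = (0, 0) then 1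
    else if p = (0, 1) then 2 else 3
  left_inv := by decide
  right_inv := by decide

/-- Symbol sequence corresponding to a binary codeword under labeling `L`. -/
def xb {N : ℕ} (L : Fin 4 ≃ (ZMod 2 × ZMod 2)) (b : Fin N → ZMod 2 × ZMod 2) :
    Fin N → Fin 4 := fun k => L.symm (b k)

end

/-! Both decoders' distances are at least `√β`, with equality whenever the pair has no corner
positions. Translating a pair of codewords by a common label vector leaves `β` unchanged under
GC1, because the weight of a symbol pair depends only on the sum of its labels. Translating by
`b'' - b` maps any pair `(b, b̂)` to a pair starting at `b''`, whose symbols all lie in the inner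
points `{1, 2}`, so it has no corners and attains `√β(b, b̂)` for both decoders. Hence each
value of `a^X` over distinct codeword pairs dominates a value of `a^B`, and conversely. -/

lemma sqrt_betaW_le_aX {N : ℕ} (x xh : Fin N → Fin 4) : √(betaW x xh) ≤ aX x xh :=
  Real.sqrt_le_sqrt (le_add_of_nonneg_right (by positivity))

lemma sqrt_betaW_le_aB {N : ℕ} (x xh : Fin N → Fin 4) : √(betaW x xh) ≤ aB x xh := by
  conv_lhs => rw [← Real.div_sqrt]
  rw [aB]
  gcongr
  exact le_add_of_nonneg_right (by positivity)

lemma aX_eq_sqrt_betaW_of_wc_eq_zero {N : ℕ} {x xh : Fin N → Fin 4} (h : wc x xh = 0) :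
    aX x xh = √(betaW x xh) := by
  simp [aX, h]

lemma aB_eq_sqrt_betaW_of_wc_eq_zero {N : ℕ} {x xh : Fin N → Fin 4} (h : wc x xh = 0) :
    aB x xh = √(betaW x xh) := by
  simp [aB, h, Real.div_sqrt]

lemma wc_eq_zero_of_forall_ne {N : ℕ} {x : Fin N → Fin 4} (hx : ∀ k, x k ≠ 0 ∧ x k ≠ 3)
    (xh : Fin N → Fin 4) : wc x xh = 0 := by
  rw [wc, Finset.card_eq_zero, Finset.filter_eq_empty_iff]
  rintro k - (h | h)
  · exact (hx k).1 (congrArg Prod.fst h)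
  · exact (hx k).2 (congrArg Prod.fst h)

lemma GC1_symm_ne_zero_and_ne_three {p : ZMod 2 × ZMod 2} (hp : p.2 = 1) :
    GC1.symm p ≠ 0 ∧ GC1.symm p ≠ 3 := by
  revert p; decide

lemma natAbs_sub_eq_two_iff_GC1_add_eq (i j : Fin 4) :
    ((i : ℤ) - j).natAbs = 2 ↔ GC1 i + GC1 j = (1, 1) := by
  revert i j; decide

lemma pw_GC1_symm_add_add (c p q : ZMod 2 × ZMod 2) :
    pw (GC1.symm (c + p)) (GC1.symm (c + q)) = pw (GC1.symm p) (GC1.symm q) := by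
  have hcc : c + c = 0 := by revert c; decide
  have hsum : c + p + (c + q) = p + q := by rw [add_add_add_comm, hcc, zero_add]
  simp only [pw, GC1.symm.injective.eq_iff, add_right_inj, natAbs_sub_eq_two_iff_GC1_add_eq,
    Equiv.apply_symm_apply, hsum]

lemma betaW_xb_GC1_add_add {N : ℕ} (c b bh : Fin N → ZMod 2 × ZMod 2) :
    betaW (xb GC1 (c + b)) (xb GC1 (c + bh)) = betaW (xb GC1 b) (xb GC1 bh) :=
  Finset.sum_congr rfl fun k _ => pw_GC1_symm_add_add (c k) (b k) (bh k)

lemma exists_pair_aX_eq_aB_eq_sqrt_betaW {N : ℕ}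
    {B : Submodule (ZMod 2) (Fin N → ZMod 2 × ZMod 2)}
    {b'' : Fin N → ZMod 2 × ZMod 2} (hb'' : b'' ∈ B) (hall : ∀ k, (b'' k).2 = 1)
    {b bh : Fin N → ZMod 2 × ZMod 2} (hb : b ∈ B) (hbh : bh ∈ B) (hne : b ≠ bh) :
    ∃ c ∈ B, ∃ ch ∈ B, c ≠ ch ∧
      aX (xb GC1 c) (xb GC1 ch) = √(betaW (xb GC1 b) (xb GC1 bh)) ∧
      aB (xb GC1 c) (xb GC1 ch) = √(betaW (xb GC1 b) (xb GC1 bh)) := by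
  have hwc : wc (xb GC1 b'') (xb GC1 (b'' - b + bh)) = 0 :=
    wc_eq_zero_of_forall_ne (fun k => GC1_symm_ne_zero_and_ne_three (hall k)) _
  have hbeta : betaW (xb GC1 b'') (xb GC1 (b'' - b + bh)) = betaW (xb GC1 b) (xb GC1 bh) := by
    simpa only [sub_add_cancel] using betaW_xb_GC1_add_add (b'' - b) b bh
  refine ⟨b'', hb'', b'' - b + bh, B.add_mem (B.sub_mem hb'' hb) hbh, ?_, ?_, ?_⟩
  · exact fun h => hne (add_left_cancel (a := b'' - b) (by rwa [sub_add_cancel]))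
  · rw [aX_eq_sqrt_betaW_of_wc_eq_zero hwc, hbeta]
  · rw [aB_eq_sqrt_betaW_of_wc_eq_zero hwc, hbeta]

theorem loss_zero_GC1_general (N : ℕ)
    (B : Submodule (ZMod 2) (Fin N → ZMod 2 × ZMod 2))
    (b'' : Fin N → ZMod 2 × ZMod 2) (hb'' : b'' ∈ B)
    (hall : ∀ k, (b'' k).2 = 1) :
    sInf {r : ℝ | ∃ b ∈ B, ∃ bh ∈ B, b ≠ bh ∧ r = aX (xb GC1 b) (xb GC1 bh)}
      = sInf {r : ℝ | ∃ b ∈ B, ∃ bh ∈ B, b ≠ bh ∧ r = aB (xb GC1 b) (xb GC1 bh)} := by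
  apply csInf_eq_csInf_of_forall_exists_le
  · rintro _ ⟨b, hb, bh, hbh, hne, rfl⟩
    obtain ⟨c, hc, ch, hch, hcne, -, hcB⟩ :=
      exists_pair_aX_eq_aB_eq_sqrt_betaW hb'' hall hb hbh hne
    exact ⟨_, ⟨c, hc, ch, hch, hcne, rfl⟩, hcB ▸ sqrt_betaW_le_aX _ _⟩
  · rintro _ ⟨b, hb, bh, hbh, hne, rfl⟩
    obtain ⟨c, hc, ch, hch, hcne, hcX, -⟩ :=
      exists_pair_aX_eq_aB_eq_sqrt_betaW hb'' hall hb hbh hne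
    exact ⟨_, ⟨c, hc, ch, hch, hcne, rfl⟩, hcX ▸ sqrt_betaW_le_aB _ _⟩

/-- **Theorem 3, GC1 case.** For 4-PAM with GC1, the asymptotic
loss `L(B)` is zero for any linear code `B` (with at least two codewords) that
contains a codeword whose second bit is `1` in every position. -/
theorem loss_zero_GC1 (N : ℕ) (hN : 1 ≤ N)
    (B : Submodule (ZMod 2) (Fin N → ZMod 2 × ZMod 2))
    (hB : (B : Set (Fin N → ZMod 2 × ZMod 2)).Nontrivial)
    (b'' : Fin N → ZMod 2 × ZMod 2) (hb'' : b'' ∈ B)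
    (hall : ∀ k, (b'' k).2 = 1) :
    sInf {r : ℝ | ∃ b ∈ B, ∃ bh ∈ B, b ≠ bh ∧ r = aX (xb GC1 b) (xb GC1 bh)}
      = sInf {r : ℝ | ∃ b ∈ B, ∃ bh ∈ B, b ≠ bh ∧ r = aB (xb GC1 b) (xb GC1 bh)} :=
  loss_zero_GC1_general N B b'' hb'' hall
end
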